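/- arXiv:1703.05120 — 3 statements merged into one kernel-verified Lean document; each statement's English description precedes it below -/
import Mathlib

section
/- Let β∈(0,1), N>1 and set z₀=(2N)^{1/(1-β)}. Let x:[-2,0]→ℝ be continuous with diameter D(x)=sup_{t₁,t₂∈[-2,0]}|x(t₁)-x(t₂)|. If there exist t₁,t₂∈[-2,0] with x(t₂)≥z₀ and x(t₁)≥x(t₂)+2N·x(t₂)^β, then D(x) ≥ N·|x(0)|^β. -/
theorem diameter_lower_bound
    (β N : ℝ) (hβ : β ∈ Set.Ioo (0 : ℝ) 1) (hN : 1 < N)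
    (x : ℝ → ℝ) (hx : ContinuousOn x (Set.Icc (-2 : ℝ) 0))
    (t₁ t₂ : ℝ) (ht₁ : t₁ ∈ Set.Icc (-2 : ℝ) 0) (ht₂ : t₂ ∈ Set.Icc (-2 : ℝ) 0)
    (h₂ : (2 * N) ^ (1 / (1 - β)) ≤ x t₂)
    (h₁ : x t₂ + 2 * N * (x t₂) ^ β ≤ x t₁) :
    N * |x 0| ^ β ≤
      sSup {d : ℝ | ∃ s₁ ∈ Set.Icc (-2 : ℝ) 0, ∃ s₂ ∈ Set.Icc (-2 : ℝ) 0,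
        d = |x s₁ - x s₂|} := by
  obtain ⟨hβ0, hβ1⟩ := hβ
  set S := {d : ℝ | ∃ s₁ ∈ Set.Icc (-2 : ℝ) 0, ∃ s₂ ∈ Set.Icc (-2 : ℝ) 0,
        d = |x s₁ - x s₂|} with hS
  have h0mem : (0 : ℝ) ∈ Set.Icc (-2 : ℝ) 0 := by constructor <;> norm_num
  -- bounded above
  obtain ⟨C, hC⟩ := IsCompact.exists_bound_of_continuousOn isCompact_Icc hx
  have hbdd : BddAbove S := by
    refine ⟨2 * C, ?_⟩
    rintro d ⟨s₁, hs₁, s₂, hs₂, rfl⟩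
    have := hC s₁ hs₁
    have := hC s₂ hs₂
    calc |x s₁ - x s₂| ≤ ‖x s₁‖ + ‖x s₂‖ := by
          simpa [Real.norm_eq_abs] using abs_sub (x s₁) (x s₂)
      _ ≤ 2 * C := by linarith
  have h2N : (1 : ℝ) < 2 * N := by linarith
  have h2N0 : (0 : ℝ) ≤ 2 * N := by linarith
  have h1β : (0 : ℝ) < 1 - β := by linarith
  -- z₀ ≥ 1
  have hz₀1 : (1 : ℝ) ≤ (2 * N) ^ (1 / (1 - β)) :=
    Real.one_le_rpow h2N.le (by positivity)
  have hz : (0 : ℝ) < x t₂ := lt_of_lt_of_le (by linarith) h₂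
  set z := x t₂ with hzdef
  -- z^(1-β) ≥ 2N
  have key : 2 * N ≤ z ^ (1 - β) := by
    have h1 : ((2 * N) ^ (1 / (1 - β))) ^ (1 - β) ≤ z ^ (1 - β) :=
      Real.rpow_le_rpow (by positivity) h₂ h1β.le
    rwa [← Real.rpow_mul h2N0, one_div_mul_cancel h1β.ne', Real.rpow_one] at h1
  have key2 : 2 * N * z ^ β ≤ z := by
    have hz1 : z ^ (1 - β) * z ^ β = z := by
      rw [← Real.rpow_add hz, sub_add_cancel, Real.rpow_one]
    have := mul_le_mul_of_nonneg_right key (Real.rpow_nonneg hz.le β)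
    rwa [hz1] at this
  have hzβpos : (0 : ℝ) < z ^ β := Real.rpow_pos_of_pos hz β
  by_cases hcase : |x 0| ^ β ≤ 2 * z ^ β
  · -- use t₁, t₂
    have hel : |x t₁ - x t₂| ∈ S := ⟨t₁, ht₁, t₂, ht₂, rfl⟩
    have h3 : 2 * N * z ^ β ≤ |x t₁ - x t₂| := by
      rw [abs_of_nonneg (by nlinarith)]
      linarith
    calc N * |x 0| ^ β ≤ N * (2 * z ^ β) :=
          mul_le_mul_of_nonneg_left hcase (by linarith)
      _ ≤ |x t₁ - x t₂| := by linarith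
      _ ≤ sSup S := le_csSup hbdd hel
  · push_neg at hcase
    -- then 2z ≤ |x 0|
    have hzx : 2 * z ≤ |x 0| := by
      by_contra h
      push_neg at h
      have h1 : |x 0| ^ β ≤ (2 * z) ^ β :=
        Real.rpow_le_rpow (abs_nonneg _) h.le hβ0.le
      have h2' : (2 * z) ^ β = 2 ^ β * z ^ β :=
        Real.mul_rpow (by norm_num) hz.le
      have h3 : (2 : ℝ) ^ β ≤ 2 ^ (1 : ℝ) :=
        Real.rpow_le_rpow_of_exponent_le (by norm_num) hβ1.le
      rw [Real.rpow_one] at h3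
      nlinarith
    have hx0pos : (0 : ℝ) < |x 0| := by linarith
    -- |x 0| ≥ z₀, hence |x 0| ≥ 2N |x0|^β
    have hx0z₀ : (2 * N) ^ (1 / (1 - β)) ≤ |x 0| := by linarith
    have key' : 2 * N ≤ |x 0| ^ (1 - β) := by
      have h1 : ((2 * N) ^ (1 / (1 - β))) ^ (1 - β) ≤ |x 0| ^ (1 - β) :=
        Real.rpow_le_rpow (by positivity) hx0z₀ h1β.le
      rwa [← Real.rpow_mul h2N0, one_div_mul_cancel h1β.ne', Real.rpow_one] at h1
    have key2' : 2 * N * |x 0| ^ β ≤ |x 0| := by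
      have hz1 : |x 0| ^ (1 - β) * |x 0| ^ β = |x 0| := by
        rw [← Real.rpow_add hx0pos, sub_add_cancel, Real.rpow_one]
      have := mul_le_mul_of_nonneg_right key' (Real.rpow_nonneg (abs_nonneg (x 0)) β)
      rwa [hz1] at this
    have hel : |x 0 - x t₂| ∈ S := ⟨0, h0mem, t₂, ht₂, rfl⟩
    have h4 : N * |x 0| ^ β ≤ |x 0 - x t₂| := by
      have h5 : |x 0| - |x t₂| ≤ |x 0 - x t₂| := abs_sub_abs_le_abs_sub _ _
      have h6 : |x t₂| = z := abs_of_pos hz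
      nlinarith
    exact le_trans h4 (le_csSup hbdd hel)
end

section
/- Let p>1, K≥0 and a,b∈[0,1] satisfy a^p ≤ b·e^K. Then a - b ≤ 1 - min(e^{-K}, 1/p). -/
theorem harnack_to_tv_bound
    (p K a b : ℝ) (hp : 1 < p) (hK : 0 ≤ K)
    (ha : a ∈ Set.Icc (0 : ℝ) 1) (hb : b ∈ Set.Icc (0 : ℝ) 1)
    (h : a ^ p ≤ b * Real.exp K) :
    a - b ≤ 1 - min (Real.exp (-K)) (1 / p) := by
  obtain ⟨ha0, ha1⟩ := ha
  obtain ⟨hb0, hb1⟩ := hb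
  set m := min (Real.exp (-K)) (1 / p) with hm
  have hp0 : 0 < p := by linarith
  have hm1 : m ≤ Real.exp (-K) := min_le_left _ _
  have hm2 : m ≤ 1 / p := min_le_right _ _
  have hmp : m * p ≤ 1 := by
    calc m * p ≤ (1 / p) * p := by nlinarith
    _ = 1 := by field_simp
  have hm0 : 0 ≤ m := le_min (Real.exp_pos _).le (by positivity)
  have hexp : Real.exp (-K) * Real.exp K = 1 := by
    rw [← Real.exp_add]; simp
  have hb' : a ^ p * Real.exp (-K) ≤ b := by
    have := mul_le_mul_of_nonneg_right h (Real.exp_pos (-K)).le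
    nlinarith [Real.exp_pos (-K), Real.exp_pos K]
  have bern : 1 + p * (a - 1) ≤ a ^ p := by
    have := one_add_mul_self_le_rpow_one_add (s := a - 1) (by linarith) hp.le
    simpa using this
  have hap : 0 ≤ a ^ p := Real.rpow_nonneg ha0 p
  nlinarith [mul_le_mul_of_nonneg_right bern hm0,
    hb',
    mul_le_mul_of_nonneg_left hm1 hap,
    mul_le_mul_of_nonneg_right hmp (sub_nonneg.mpr ha1)]
end

section
/- Let γ∈(-1,1) and r≥0. For every σ∈(0,1) there exists M>0 such that for every continuous x:[-r,0]→ℝ satisfying |x(0)|≥M, D(x) ≤ |x(0)|^{(1+γ)/2}, and |x(-r)|≥1, the inequality (-sign(x(-r))·|x(-r)|^γ)·x(0) ≤ -σ·|x(0)|^{γ+1} holds. -/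
theorem drift_condition_verification
    (γ r : ℝ) (hγ : γ ∈ Set.Ioo (-1 : ℝ) 1) (hr : 0 ≤ r) :
    ∀ σ ∈ Set.Ioo (0 : ℝ) 1, ∃ M > 0,
      ∀ x : ℝ → ℝ, ContinuousOn x (Set.Icc (-r) 0) →
        M ≤ |x 0| →
        sSup {c : ℝ | ∃ t₁ ∈ Set.Icc (-r) 0, ∃ t₂ ∈ Set.Icc (-r) 0,
            c = |x t₁ - x t₂|} ≤ |x 0| ^ ((1 + γ) / 2) →
        1 ≤ |x (-r)| →
        (-Real.sign (x (-r)) * |x (-r)| ^ γ) * x 0 ≤ -σ * |x 0| ^ (γ + 1) := by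
  obtain ⟨hγ1, hγ2⟩ := hγ
  rintro σ ⟨hσ0, hσ1⟩
  refine ⟨max 1 ((1 - σ) ^ ((2:ℝ)/(γ - 1))), lt_of_lt_of_le one_pos (le_max_left _ _), ?_⟩
  intro x hx hM hD hb1
  set a := x 0 with ha_def
  set b := x (-r) with hb_def
  have ha1 : (1:ℝ) ≤ |a| := le_trans (le_max_left _ _) hM
  have ha0 : 0 < |a| := lt_of_lt_of_le one_pos ha1
  have hb0 : 0 < |b| := lt_of_lt_of_le one_pos hb1
  have hmem0 : (0:ℝ) ∈ Set.Icc (-r) 0 := ⟨neg_nonpos.mpr hr, le_refl 0⟩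
  have hmemr : (-r) ∈ Set.Icc (-r) 0 := ⟨le_refl _, neg_nonpos.mpr hr⟩
  have hbdd : BddAbove {c : ℝ | ∃ t₁ ∈ Set.Icc (-r) 0, ∃ t₂ ∈ Set.Icc (-r) 0,
      c = |x t₁ - x t₂|} := by
    obtain ⟨C, hC⟩ := isCompact_Icc.bddAbove_image hx
    obtain ⟨c, hc⟩ := isCompact_Icc.bddBelow_image hx
    refine ⟨C - c, ?_⟩
    rintro s ⟨t₁, ht₁, t₂, ht₂, rfl⟩
    have h1 := hC (Set.mem_image_of_mem x ht₁)
    have h2 := hC (Set.mem_image_of_mem x ht₂)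
    have h3 := hc (Set.mem_image_of_mem x ht₁)
    have h4 := hc (Set.mem_image_of_mem x ht₂)
    rw [abs_le]
    constructor <;> linarith
  have hab_mem : |a - b| ∈ {c : ℝ | ∃ t₁ ∈ Set.Icc (-r) 0, ∃ t₂ ∈ Set.Icc (-r) 0,
      c = |x t₁ - x t₂|} := ⟨0, hmem0, -r, hmemr, rfl⟩
  have hab : |a - b| ≤ |a| ^ ((1 + γ) / 2) := le_trans (le_csSup hbdd hab_mem) hD
  have hσε : 0 < 1 - σ := by linarith
  have hMa : (1 - σ) ^ ((2:ℝ)/(γ - 1)) ≤ |a| := le_trans (le_max_right _ _) hM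
  have hkey : |a| ^ ((γ - 1)/2) ≤ 1 - σ := by
    calc |a| ^ ((γ - 1)/2) ≤ ((1 - σ) ^ ((2:ℝ)/(γ - 1))) ^ ((γ - 1)/2) :=
          Real.rpow_le_rpow_of_nonpos (Real.rpow_pos_of_pos hσε _) hMa (by linarith)
      _ = (1 - σ) ^ ((2:ℝ)/(γ - 1) * ((γ - 1)/2)) := (Real.rpow_mul hσε.le _ _).symm
      _ = 1 - σ := by
          rw [show (2:ℝ)/(γ - 1) * ((γ - 1)/2) = 1 by field_simp [sub_ne_zero.mpr hγ2.ne], Real.rpow_one]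
  have hab2 : |a - b| ≤ (1 - σ) * |a| := by
    have hsplit : |a| ^ ((1 + γ)/2) = |a| * |a| ^ ((γ - 1)/2) := by
      rw [show (1 + γ)/2 = 1 + (γ - 1)/2 by ring, Real.rpow_add ha0, Real.rpow_one]
    calc |a - b| ≤ |a| ^ ((1 + γ)/2) := hab
      _ = |a| * |a| ^ ((γ - 1)/2) := hsplit
      _ ≤ |a| * (1 - σ) := mul_le_mul_of_nonneg_left hkey ha0.le
      _ = (1 - σ) * |a| := mul_comm _ _
  have hsign : Real.sign b * a = |a| := by
    rcases lt_trichotomy a 0 with h | h | h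
    · have hane : |a| = -a := abs_of_neg h
      have h1 : b - a ≤ |a - b| := by rw [abs_sub_comm]; exact le_abs_self _
      have hbneg : b < 0 := by nlinarith
      rw [Real.sign_of_neg hbneg, hane]; ring
    · exfalso; rw [h] at ha0; simp at ha0
    · have hane : |a| = a := abs_of_pos h
      have h1 : a - b ≤ |a - b| := le_abs_self _
      have hbpos : 0 < b := by nlinarith
      rw [Real.sign_of_pos hbpos, hane]; ring
  have hblo : σ * |a| ≤ |b| := by
    have h := abs_sub_abs_le_abs_sub a b
    linarith
  have hbhi : |b| ≤ (2 - σ) * |a| := by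
    have h := abs_sub_abs_le_abs_sub b a
    rw [abs_sub_comm] at h
    linarith
  have hσγ : σ * |a| ^ γ ≤ |b| ^ γ := by
    rcases le_or_gt 0 γ with hg | hg
    · calc σ * |a| ^ γ ≤ σ ^ γ * |a| ^ γ := by
            have : σ ^ (1:ℝ) ≤ σ ^ γ :=
              Real.rpow_le_rpow_of_exponent_ge hσ0 hσ1.le hγ2.le
            rw [Real.rpow_one] at this
            exact mul_le_mul_of_nonneg_right this (Real.rpow_nonneg (abs_nonneg _) _)
        _ = (σ * |a|) ^ γ := (Real.mul_rpow hσ0.le (abs_nonneg _)).symm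
        _ ≤ |b| ^ γ := Real.rpow_le_rpow (by positivity) hblo hg
    · have h20 : (0:ℝ) < 2 - σ := by linarith
      have h1 : ((2 - σ) * |a|) ^ γ ≤ |b| ^ γ :=
        Real.rpow_le_rpow_of_nonpos hb0 hbhi hg.le
      have h2 : ((2 - σ) * |a|) ^ γ = (2 - σ) ^ γ * |a| ^ γ :=
        Real.mul_rpow h20.le (abs_nonneg _)
      have h3 : (2 - σ) ^ (-1:ℝ) ≤ (2 - σ) ^ γ :=
        Real.rpow_le_rpow_of_exponent_le (by linarith) (by linarith)
      have h4 : σ ≤ (2 - σ) ^ (-1:ℝ) := by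
        rw [Real.rpow_neg_one]
        have hinv : (2 - σ)⁻¹ * (2 - σ) = 1 := inv_mul_cancel₀ (ne_of_gt h20)
        nlinarith [inv_pos.mpr h20, sq_nonneg (1 - σ)]
      calc σ * |a| ^ γ ≤ (2 - σ) ^ γ * |a| ^ γ :=
            mul_le_mul_of_nonneg_right (le_trans h4 h3) (Real.rpow_nonneg (abs_nonneg _) _)
        _ = ((2 - σ) * |a|) ^ γ := h2.symm
        _ ≤ |b| ^ γ := h1
  have hrw : |a| ^ (γ + 1) = |a| ^ γ * |a| := by
    rw [Real.rpow_add ha0, Real.rpow_one]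
  have hlhs : -Real.sign b * |b| ^ γ * a = -(|b| ^ γ * (Real.sign b * a)) := by ring
  rw [hrw, hlhs, hsign]
  nlinarith [mul_le_mul_of_nonneg_right hσγ (abs_nonneg a)]
end
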